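/- arXiv:2104.13574 — 3 statements merged into one kernel-verified Lean document; each statement's English description precedes it below -/
import Mathlib

section
/- Fix c > 0. The function g defined on (0, ∞) by g(u) = (1/u)·∫ t over (0, c·u) of exp(-t²) is strictly antitone (strictly decreasing) on (0, ∞). -/
/-!
Substituting `t = u * s` turns `(1 / u) * ∫₀^{c u} f` into `∫₀^c f (u * s) ds`. When `f` is strictly
decreasing on `[0, ∞)`, the integrand decreases pointwise in `u` for `s ∈ (0, c]`, strictly at
`s = c`, so the integral is strictly decreasing in `u`. Apply this to `f t = exp (-t ^ 2)`.
-/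

open Set intervalIntegral

theorem intervalIntegral.inv_mul_integral_zero_mul (f : ℝ → ℝ) (c : ℝ) {u : ℝ} (hu : u ≠ 0) :
    (1 / u) * ∫ t in 0..c * u, f t = ∫ s in 0..c, f (u * s) := by
  rw [integral_comp_mul_left f hu, mul_zero, mul_comm u c, one_div, smul_eq_mul]

theorem strictAntiOn_inv_mul_integral_zero {f : ℝ → ℝ} (hf_cont : ContinuousOn f (Ici 0))
    (hf_anti : StrictAntiOn f (Ici 0)) {c : ℝ} (hc : 0 < c) :
    StrictAntiOn (fun u : ℝ => (1 / u) * ∫ t in 0..c * u, f t) (Ioi 0) := by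
  intro a ha b hb hab
  have hcont : ∀ u ∈ Ioi (0 : ℝ), ContinuousOn (fun s => f (u * s)) (Icc 0 c) := fun u hu =>
    hf_cont.comp (continuousOn_const.mul continuousOn_id) fun s hs => mul_nonneg (le_of_lt hu) hs.1
  have hle : ∀ s ∈ Ioc 0 c, f (b * s) ≤ f (a * s) := fun s hs =>
    (hf_anti (mem_Ici.2 (mul_pos ha hs.1).le) (mem_Ici.2 (mul_pos hb hs.1).le)
      (mul_lt_mul_of_pos_right hab hs.1)).le
  have hlt : f (b * c) < f (a * c) :=
    hf_anti (mem_Ici.2 (mul_pos ha hc).le) (mem_Ici.2 (mul_pos hb hc).le)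
      (mul_lt_mul_of_pos_right hab hc)
  simp only [inv_mul_integral_zero_mul f c (ne_of_gt ha), inv_mul_integral_zero_mul f c (ne_of_gt hb)]
  exact integral_lt_integral_of_continuousOn_of_le_of_exists_lt hc (hcont b hb) (hcont a ha) hle
    ⟨c, right_mem_Icc.2 hc.le, hlt⟩

theorem Real.strictAntiOn_exp_neg_sq : StrictAntiOn (fun t : ℝ => Real.exp (-t ^ 2)) (Ici 0) :=
  fun _ hx _ hy hxy =>
    Real.exp_strictMono (neg_lt_neg (pow_left_strictMonoOn₀ two_ne_zero hx hy hxy))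

theorem stmt_8 (c : ℝ) (hc : 0 < c) :
    StrictAntiOn
      (fun u : ℝ => (1 / u) * ∫ t in Set.Ioo (0:ℝ) (c * u), Real.exp (-t ^ 2))
      (Set.Ioi 0) := by
  have hIoo : ∀ u ∈ Ioi (0 : ℝ), (∫ t in Ioo 0 (c * u), Real.exp (-t ^ 2))
      = ∫ t in 0..c * u, Real.exp (-t ^ 2) := fun u hu => by
    rw [integral_of_le (mul_pos hc hu).le, MeasureTheory.integral_Ioc_eq_integral_Ioo]
  refine (strictAntiOn_inv_mul_integral_zero (by fun_prop) Real.strictAntiOn_exp_neg_sq hc).congr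
    fun u hu => ?_
  simp only [hIoo u hu]
end

section
/- Fix λ > 0 and c > 0, and define Θ : (0, ∞) → ℝ by Θ(Γ) = (2π/√Γ)·∫ t over (0, c·√Γ) of exp(-t²). Then the function Γ ↦ (1 - exp(-λ·Θ(Γ)))/Θ(Γ) is strictly monotone increasing on (0, ∞). -/
/-!
Both `Θ` and `θ ↦ (1 - exp (-λθ)) / θ` are slopes of secants through the origin of strictly
concave functions vanishing at `0`: with `x = c √Γ` and `F x = ∫₀ˣ exp (-t²)`, one has
`Θ(Γ) = 2πc · F x / x`, and `1 - exp (-λθ)` is concave in `θ`. Such slopes are strictly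
decreasing, so `Θ` decreases in `Γ`, and `λ̃ = (1 - exp (-λΘ)) / Θ` increases as a composition of
two strictly decreasing maps.
-/

open Real Set MeasureTheory intervalIntegral

theorem StrictConcaveOn.strictAntiOn_div_self {f : ℝ → ℝ} (hf : StrictConcaveOn ℝ (Ici 0) f)
    (h0 : f 0 = 0) : StrictAntiOn (fun x => f x / x) (Ioi 0) := by
  intro x hx y hy hxy
  simpa [h0] using hf.secant_strict_mono self_mem_Ici (mem_Ici_of_Ioi hx) (mem_Ici_of_Ioi hy)
    hx.ne' hy.ne' hxy

theorem strictConcaveOn_one_sub_exp_neg_mul {l : ℝ} (hl : 0 < l) :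
    StrictConcaveOn ℝ univ (fun θ => 1 - exp (-l * θ)) := by
  have hderiv : deriv (fun θ => 1 - exp (-l * θ)) = fun θ => l * exp (-l * θ) := by
    funext θ
    have := (((hasDerivAt_id θ).const_mul (-l)).exp).const_sub 1
    simpa [mul_comm] using this.deriv
  refine StrictAntiOn.strictConcaveOn_of_deriv convex_univ (by fun_prop) ?_
  rw [hderiv]
  intro x _ y _ hxy
  exact mul_lt_mul_of_pos_left (exp_lt_exp.2 (by nlinarith)) hl

theorem strictConcaveOn_integral_exp_neg_sq :
    StrictConcaveOn ℝ (Ici 0) (fun x => ∫ t in (0 : ℝ)..x, exp (-t ^ 2)) := by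
  have hcont : Continuous fun t : ℝ => exp (-t ^ 2) := by fun_prop
  have hderiv : deriv (fun x => ∫ t in (0 : ℝ)..x, exp (-t ^ 2)) = fun x => exp (-x ^ 2) :=
    funext (hcont.deriv_integral _ 0)
  refine StrictAntiOn.strictConcaveOn_of_deriv (convex_Ici 0)
    (differentiableOn_integral_of_continuous hcont).continuousOn ?_
  rw [hderiv, interior_Ici]
  intro x hx y _ hxy
  exact exp_lt_exp.2 (by nlinarith [mem_Ioi.1 hx])

theorem integral_exp_neg_sq_pos {x : ℝ} (hx : 0 < x) : 0 < ∫ t in (0 : ℝ)..x, exp (-t ^ 2) :=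
  intervalIntegral_pos_of_pos ((by fun_prop : Continuous _).intervalIntegrable _ _)
    (fun _ => exp_pos _) hx

/-- The mean measure `Θ(Γ)` of the carrier-sensing region for path-loss exponent `2`. -/
noncomputable def sensingMeasure (c Γ : ℝ) : ℝ :=
  2 * π / √Γ * ∫ t in Ioo 0 (c * √Γ), exp (-t ^ 2)

theorem sensingMeasure_eq_mul_slope {c Γ : ℝ} (hc : 0 < c) (hΓ : 0 < Γ) :
    sensingMeasure c Γ =
      2 * π * c * ((∫ t in (0 : ℝ)..c * √Γ, exp (-t ^ 2)) / (c * √Γ)) := by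
  have hs : √Γ ≠ 0 := (sqrt_pos.2 hΓ).ne'
  rw [sensingMeasure, integral_of_le (by positivity), integral_Ioc_eq_integral_Ioo]
  field_simp

theorem sensingMeasure_pos {c Γ : ℝ} (hc : 0 < c) (hΓ : 0 < Γ) : 0 < sensingMeasure c Γ := by
  have hx : 0 < c * √Γ := mul_pos hc (sqrt_pos.2 hΓ)
  rw [sensingMeasure_eq_mul_slope hc hΓ]
  exact mul_pos (by positivity) (div_pos (integral_exp_neg_sq_pos hx) hx)

theorem strictAntiOn_sensingMeasure {c : ℝ} (hc : 0 < c) :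
    StrictAntiOn (sensingMeasure c) (Ioi 0) := by
  have hslope := strictConcaveOn_integral_exp_neg_sq.strictAntiOn_div_self integral_same
  have hx : StrictMonoOn (fun Γ => c * √Γ) (Ioi 0) := fun Γ hΓ Γ' _ h =>
    mul_lt_mul_of_pos_left (sqrt_lt_sqrt hΓ.le h) hc
  have hmaps : MapsTo (fun Γ => c * √Γ) (Ioi 0) (Ioi 0) := fun Γ hΓ => mul_pos hc (sqrt_pos.2 hΓ)
  refine StrictAntiOn.congr (fun Γ hΓ Γ' hΓ' h => ?_)
    fun Γ hΓ => (sensingMeasure_eq_mul_slope hc hΓ).symm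
  exact mul_lt_mul_of_pos_left (hslope.comp_strictMonoOn hx hmaps hΓ hΓ' h) (by positivity)

theorem stmt_9 (l c : ℝ) (hl : 0 < l) (hc : 0 < c) :
    StrictMonoOn
      (fun Γ : ℝ =>
        (1 - Real.exp (-l * ((2 * Real.pi / Real.sqrt Γ) *
            ∫ t in Set.Ioo (0:ℝ) (c * Real.sqrt Γ), Real.exp (-t ^ 2)))) /
          ((2 * Real.pi / Real.sqrt Γ) *
            ∫ t in Set.Ioo (0:ℝ) (c * Real.sqrt Γ), Real.exp (-t ^ 2)))
      (Set.Ioi 0) := by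
  have hdensity := ((strictConcaveOn_one_sub_exp_neg_mul hl).subset (subset_univ _)
    (convex_Ici 0)).strictAntiOn_div_self (by simp)
  change StrictMonoOn (fun Γ => (1 - exp (-l * sensingMeasure c Γ)) / sensingMeasure c Γ) (Ioi 0)
  exact hdensity.comp (strictAntiOn_sensingMeasure hc) fun Γ hΓ => sensingMeasure_pos hc hΓ
end

section
/- For all real numbers λ > 0 and n > 0, the integral of r·(2·(λ·π)^n·r^(2n-1)·exp(-λ·π·r²)/Γ(n)) for r ranging over (0, ∞) equals Γ(n + 1/2)/(Γ(n)·√(λ·π)), where Γ denotes the real Gamma function. -/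
open Real Set MeasureTheory

/-- The parameter `b` stands for `λπ`, `λ` the intensity of the Poisson process. -/
noncomputable def nthNearestDistanceDensity (b n r : ℝ) : ℝ :=
  2 * b ^ n * r ^ (2 * n - 1) * exp (-b * r ^ 2) / Gamma n

theorem integral_rpow_mul_nthNearestDistanceDensity {b n s : ℝ} (hb : 0 < b)
    (hs : 0 < 2 * n + s) :
    ∫ r in Ioi (0 : ℝ), r ^ s * nthNearestDistanceDensity b n r =
      Gamma (n + s / 2) / (Gamma n * b ^ (s / 2)) := by
  have h_integrand : EqOn (fun r => r ^ s * nthNearestDistanceDensity b n r)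
      (fun r => 2 * b ^ n / Gamma n * (r ^ (2 * n - 1 + s) * exp (-b * r ^ (2 : ℝ)))) (Ioi 0) := by
    intro r (hr : 0 < r)
    simp only [nthNearestDistanceDensity, rpow_add hr, rpow_two]
    ring
  have h_exponent : b ^ n * b ^ (-(2 * n - 1 + s + 1) / 2) = (b ^ (s / 2))⁻¹ := by
    rw [← rpow_add hb, ← rpow_neg hb.le]
    ring_nf
  rw [setIntegral_congr_fun measurableSet_Ioi h_integrand, integral_const_mul,
    integral_rpow_mul_exp_neg_mul_rpow two_pos (by linarith) hb,
    show (2 * n - 1 + s + 1) / 2 = n + s / 2 by ring]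
  calc 2 * b ^ n / Gamma n * (b ^ (-(2 * n - 1 + s + 1) / 2) * (1 / 2) * Gamma (n + s / 2))
      = b ^ n * b ^ (-(2 * n - 1 + s + 1) / 2) * Gamma (n + s / 2) / Gamma n := by ring
    _ = Gamma (n + s / 2) / (Gamma n * b ^ (s / 2)) := by
      rw [h_exponent]
      ring

theorem stmt_13 (l n : ℝ) (hl : 0 < l) (hn : 0 < n) :
    (∫ r in Set.Ioi (0:ℝ),
        r * (2 * (l * Real.pi) ^ n * r ^ (2 * n - 1) * Real.exp (-l * Real.pi * r ^ 2) /
          Real.Gamma n)) =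
      Real.Gamma (n + 1 / 2) / (Real.Gamma n * Real.sqrt (l * Real.pi)) := by
  have h_mean := integral_rpow_mul_nthNearestDistanceDensity (b := l * π) (n := n) (s := 1)
    (by positivity) (by linarith)
  simp only [rpow_one, nthNearestDistanceDensity, neg_mul] at h_mean
  rw [sqrt_eq_rpow, ← h_mean]
  simp only [neg_mul]
end
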